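/- arXiv:1207.5548 — 3 statements merged into one kernel-verified Lean document; each statement's English description precedes it below -/
import Mathlib

section
/- For all reals α, γ, y and every natural number n, the non-central connection identity holds: (yα − γ)_n = ∑_{k=0}^{n} α^k·S(n,k;α,γ)·(y)_k, where S(n,k;α,γ) is the non-central generalized Stirling number. -/
/-- Rising factorial `(x)_n = x(x+1)⋯(x+n−1)`. -/
noncomputable def risingFac (x : ℝ) (n : ℕ) : ℝ := ∏ i ∈ Finset.range n, (x + i)

/-- Rising factorial with increment `α`: `(x)_{n↑α} = ∏_{i<n} (x + iα)`. -/
noncomputable def risingFacInc (x α : ℝ) (n : ℕ) : ℝ := ∏ i ∈ Finset.range n, (x + i * α)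

/-- Falling factorial `(x)_{[n]} = x(x−1)⋯(x−n+1)`. -/
noncomputable def fallingFac (x : ℝ) (n : ℕ) : ℝ := ∏ i ∈ Finset.range n, (x - i)

/-- Compositions of `n` into `k` positive parts, as functions `Fin k → ℕ`. -/
def compositions (n k : ℕ) : Finset (Fin k → ℕ) :=
  (Fintype.piFinset fun _ => Finset.range (n + 1)).filter
    (fun f => (∀ i, 0 < f i) ∧ ∑ i, f i = n)

/-- Tuples of `k` nonnegative integers summing to `n`. -/
def weakCompositions (n k : ℕ) : Finset (Fin k → ℕ) :=
  (Fintype.piFinset fun _ => Finset.range (n + 1)).filter (fun f => ∑ i, f i = n)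

/-- Generalized (central) Stirling number
`S(n,k;α) = (n!/k!) ∑_{(n_1,…,n_k)} ∏_j (1−α)_{n_j−1}/n_j!`,
the sum over compositions of `n` into `k` positive parts. -/
noncomputable def genStirling (α : ℝ) (n k : ℕ) : ℝ :=
  (Nat.factorial n : ℝ) / (Nat.factorial k : ℝ) *
    ∑ f ∈ compositions n k, ∏ j, risingFac (1 - α) (f j - 1) / (Nat.factorial (f j) : ℝ)

/-- Non-central generalized Stirling number
`S(n,k;α,γ) = ∑_{s=k}^n C(n,s) S(s,k;α) (−γ)_{n−s}`. -/
noncomputable def genStirlingNC (α γ : ℝ) (n k : ℕ) : ℝ :=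
  ∑ s ∈ Finset.Icc k n, (n.choose s : ℝ) * genStirling α s k * risingFac (-γ) (n - s)

/-!
The exponential generating function of `S(·, k; α)` is `B^k / k!`, where
`B = ∑_{m ≥ 1} (1 - α)_{m-1} t^m / m!` is formally `(1 - (1 - t)^α) / α`. The differential
equation `(1 - t) B' = 1 - α B` turns into the triangular recurrence
`S(n+1, k+1; α) = S(n, k; α) + (n - (k+1)α) S(n, k+1; α)`, from which the central identity
`(yα)_n = ∑_k α^k S(n, k; α) (y)_k` follows by induction on `n`. The non-central identity is
then the Vandermonde convolution `(yα - γ)_n = ∑_s C(n, s) (yα)_s (-γ)_{n-s}` of rising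
factorials.
-/

open Finset PowerSeries
open scoped Nat

lemma risingFac_succ (x : ℝ) (n : ℕ) : risingFac x (n + 1) = risingFac x n * (x + n) :=
  prod_range_succ _ _

lemma risingFac_eq_neg_one_pow_mul_smeval (x : ℝ) (n : ℕ) :
    risingFac x n = (-1) ^ n * (descPochhammer ℤ n).smeval (-x) := by
  rw [← Polynomial.aeval_eq_smeval, Polynomial.aeval_def, Polynomial.eval₂_eq_eval_map,
    descPochhammer_map, descPochhammer_eval_eq_prod_range, risingFac,
    show (-1 : ℝ) ^ n = ∏ _j ∈ range n, (-1) by simp, ← prod_mul_distrib]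
  exact prod_congr rfl fun i _ => by ring

lemma risingFac_add (a b : ℝ) (n : ℕ) :
    risingFac (a + b) n =
      ∑ s ∈ range (n + 1), (n.choose s : ℝ) * risingFac a s * risingFac b (n - s) := by
  rw [← Nat.sum_antidiagonal_eq_sum_range_succ
    fun s t => (n.choose s : ℝ) * risingFac a s * risingFac b t]
  simp_rw [risingFac_eq_neg_one_pow_mul_smeval, neg_add,
    Ring.descPochhammer_smeval_add n (Commute.all (-a) (-b)), mul_sum]
  refine sum_congr rfl fun ij hij => ?_
  rw [HasAntidiagonal.mem_antidiagonal] at hij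
  rw [← hij, pow_add]
  ring

noncomputable def blockSeries (α : ℝ) : ℝ⟦X⟧ :=
  mk fun m => if m = 0 then 0 else risingFac (1 - α) (m - 1) / (m ! : ℝ)

lemma sum_finsuppAntidiag_eq_sum_piAntidiag {ι M : Type*} [DecidableEq ι] [AddCommMonoid M]
    (s : Finset ι) (n : ℕ) (g : (ι → ℕ) → M) :
    ∑ l ∈ finsuppAntidiag s n, g l = ∑ f ∈ piAntidiag s n, g f := by
  rw [finsuppAntidiag, sum_map]
  exact sum_attach (piAntidiag s n) g

lemma compositions_eq_filter_piAntidiag (n k : ℕ) :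
    compositions n k = (piAntidiag univ n).filter fun f => ∀ i, 0 < f i := by
  ext f
  simp only [compositions, mem_filter, Fintype.mem_piFinset, mem_range, mem_piAntidiag, mem_univ,
    implies_true, and_true]
  constructor
  · exact fun h => ⟨h.2.2, h.2.1⟩
  · rintro ⟨hsum, hpos⟩
    refine ⟨fun i => Nat.lt_succ_of_le ?_, hpos, hsum⟩
    exact hsum ▸ single_le_sum (fun j _ => Nat.zero_le (f j)) (mem_univ i)

lemma coeff_blockSeries_pow (α : ℝ) (n k : ℕ) :
    coeff n (blockSeries α ^ k) =
      ∑ f ∈ compositions n k, ∏ j, risingFac (1 - α) (f j - 1) / ((f j)! : ℝ) := by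
  rw [← Fin.prod_const, coeff_prod,
    sum_finsuppAntidiag_eq_sum_piAntidiag _ _ fun f => ∏ i, coeff (f i) (blockSeries α),
    ← sum_filter_of_ne (p := fun f => ∀ i, 0 < f i), compositions_eq_filter_piAntidiag]
  · refine sum_congr rfl fun f hf => prod_congr rfl fun j _ => ?_
    simp [blockSeries, ((mem_filter.1 hf).2 j).ne']
  · intro f _ hf i
    rw [Nat.pos_iff_ne_zero]
    rintro hi
    exact hf (prod_eq_zero (mem_univ i) (by simp [blockSeries, hi]))

lemma coeff_succ_blockSeries (α : ℝ) (m : ℕ) :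
    (m + 1) * coeff (m + 1) (blockSeries α) =
      (m - α) * coeff m (blockSeries α) + if m = 0 then 1 else 0 := by
  rcases m with _ | m
  · simp [blockSeries, risingFac]
  · simp only [blockSeries, coeff_mk, Nat.add_sub_cancel, if_neg (Nat.succ_ne_zero _), add_zero,
      risingFac_succ, Nat.factorial_succ]
    push_cast
    field_simp
    ring

lemma coeff_one_sub_X_mul_derivative {R : Type*} [CommRing R] (f : R⟦X⟧) (n : ℕ) :
    coeff n ((1 - X) * d⁄dX R f) = (n + 1) * coeff (n + 1) f - n * coeff n f := by
  rw [sub_mul, one_mul, map_sub]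
  rcases n with _ | n
  · rw [coeff_zero_X_mul, coeff_derivative]
    simp
  · rw [coeff_succ_X_mul, coeff_derivative, coeff_derivative]
    push_cast
    ring

lemma one_sub_X_mul_derivative_blockSeries (α : ℝ) :
    (1 - X) * d⁄dX ℝ (blockSeries α) = 1 - C α * blockSeries α := by
  ext m
  rw [coeff_one_sub_X_mul_derivative, map_sub, coeff_C_mul, coeff_succ_blockSeries, coeff_one]
  ring

lemma coeff_blockSeries_pow_succ_succ (α : ℝ) (n k : ℕ) :
    (n + 1) * coeff (n + 1) (blockSeries α ^ (k + 1)) =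
      (k + 1) * coeff n (blockSeries α ^ k) +
        (n - (k + 1) * α) * coeff n (blockSeries α ^ (k + 1)) := by
  have hode : (1 - X) * d⁄dX ℝ (blockSeries α ^ (k + 1)) =
      C ((k : ℝ) + 1) * (blockSeries α ^ k - C α * blockSeries α ^ (k + 1)) := by
    rw [derivative_pow, Nat.add_sub_cancel, mul_left_comm, one_sub_X_mul_derivative_blockSeries]
    simp only [map_add, map_natCast, map_one, Nat.cast_add, Nat.cast_one]
    ring
  have hcoeff := congrArg (coeff n) hode
  rw [coeff_one_sub_X_mul_derivative, coeff_C_mul, map_sub, coeff_C_mul] at hcoeff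
  linear_combination hcoeff

lemma genStirling_eq_coeff (α : ℝ) (n k : ℕ) :
    genStirling α n k = n ! / k ! * coeff n (blockSeries α ^ k) := by
  rw [genStirling, coeff_blockSeries_pow]

lemma genStirling_zero_zero (α : ℝ) : genStirling α 0 0 = 1 := by
  simp [genStirling_eq_coeff]

lemma genStirling_succ_zero (α : ℝ) (n : ℕ) : genStirling α (n + 1) 0 = 0 := by
  simp [genStirling_eq_coeff]

lemma genStirling_eq_zero_of_lt (α : ℝ) {n k : ℕ} (h : n < k) : genStirling α n k = 0 := by
  have hX : X ∣ blockSeries α := X_dvd_iff.2 (by simp [blockSeries])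
  rw [genStirling_eq_coeff, X_pow_dvd_iff.1 (pow_dvd_pow_of_dvd hX k) n h, mul_zero]

lemma genStirling_succ_succ (α : ℝ) (n k : ℕ) :
    genStirling α (n + 1) (k + 1) =
      genStirling α n k + (n - (k + 1) * α) * genStirling α n (k + 1) := by
  simp only [genStirling_eq_coeff, Nat.factorial_succ, Nat.cast_mul, Nat.cast_succ]
  calc (n + 1) * n ! / ((k + 1) * k !) * coeff (n + 1) (blockSeries α ^ (k + 1))
      = n ! / ((k + 1) * k !) * ((n + 1) * coeff (n + 1) (blockSeries α ^ (k + 1))) := by ring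
    _ = _ := by
      rw [coeff_blockSeries_pow_succ_succ]
      field_simp

theorem risingFac_mul_eq_sum_genStirling (α y : ℝ) (n : ℕ) :
    risingFac (y * α) n =
      ∑ k ∈ range (n + 1), α ^ k * genStirling α n k * risingFac y k := by
  induction n with
  | zero => simp [risingFac, genStirling_zero_zero]
  | succ n ih =>
    set h : ℕ → ℝ := fun k => (n - k * α) * (α ^ k * genStirling α n k * risingFac y k)
    have h_zero : h 0 = α ^ 0 * genStirling α (n + 1) 0 * risingFac y 0 := by
      rcases n with _ | n <;> simp [h, genStirling_succ_zero]
    have h_top : h (n + 1) = 0 := by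
      simp [h, genStirling_eq_zero_of_lt α (Nat.lt_succ_self n)]
    calc risingFac (y * α) (n + 1)
        = ∑ k ∈ range (n + 1),
            (α ^ (k + 1) * genStirling α n k * risingFac y (k + 1) + h k) := by
          rw [risingFac_succ, ih, sum_mul]
          refine sum_congr rfl fun k _ => ?_
          rw [risingFac_succ]
          ring
      _ = ∑ k ∈ range (n + 1),
            (α ^ (k + 1) * genStirling α n k * risingFac y (k + 1) + h (k + 1)) + h 0 := by
          rw [sum_add_distrib, sum_add_distrib, add_assoc, ← sum_range_succ' h (n + 1),
            sum_range_succ h (n + 1), h_top, add_zero]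
      _ = ∑ k ∈ range (n + 2), α ^ k * genStirling α (n + 1) k * risingFac y k := by
          rw [sum_range_succ' _ (n + 1), h_zero]
          congr 1
          refine sum_congr rfl fun k _ => ?_
          simp only [h, genStirling_succ_succ]
          push_cast
          ring

lemma genStirlingNC_eq_sum_range (α γ : ℝ) (n k : ℕ) :
    genStirlingNC α γ n k =
      ∑ s ∈ range (n + 1),
        (n.choose s : ℝ) * genStirling α s k * risingFac (-γ) (n - s) := by
  refine sum_subset (fun s hs => ?_) fun s hs hs' => ?_
  · rw [mem_Icc] at hs
    rw [mem_range]
    omega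
  · rw [mem_range] at hs
    rw [mem_Icc] at hs'
    rw [genStirling_eq_zero_of_lt α (by omega), mul_zero, zero_mul]

/-- Non-central connection identity `(yα − γ)_n = ∑_k α^k S(n,k;α,γ) (y)_k`. -/
theorem rising_noncentral_eq_sum_pow_genStirlingNC (α γ y : ℝ) (n : ℕ) :
    risingFac (y * α - γ) n =
      ∑ k ∈ Finset.range (n + 1), α ^ k * genStirlingNC α γ n k * risingFac y k := by
  have central : ∀ s ∈ range (n + 1), risingFac (y * α) s =
      ∑ k ∈ range (n + 1), α ^ k * genStirling α s k * risingFac y k := by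
    intro s hs
    rw [risingFac_mul_eq_sum_genStirling]
    refine sum_subset (range_subset_range.2 (mem_range.1 hs)) fun k _ hk => ?_
    rw [genStirling_eq_zero_of_lt α (by simp at hk; omega), mul_zero, zero_mul]
  calc risingFac (y * α - γ) n
      = ∑ s ∈ range (n + 1),
          (n.choose s : ℝ) * risingFac (y * α) s * risingFac (-γ) (n - s) := by
        rw [sub_eq_add_neg, risingFac_add]
    _ = ∑ s ∈ range (n + 1), ∑ k ∈ range (n + 1),
          α ^ k * ((n.choose s : ℝ) * genStirling α s k * risingFac (-γ) (n - s)) *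
            risingFac y k := by
        refine sum_congr rfl fun s hs => ?_
        rw [central s hs, mul_sum, sum_mul]
        refine sum_congr rfl fun k _ => by ring
    _ = _ := by
        rw [sum_comm]
        refine sum_congr rfl fun k _ => ?_
        rw [genStirlingNC_eq_sum_range, mul_sum, sum_mul]
end

section
/- Let α < 1 be real, let V(n,k) be an arbitrary array of real weights, let n ≥ 1, 1 ≤ l ≤ n and 0 ≤ x ≤ ⌊n/l⌋. Then the law of the number of blocks of size l under the Gibbs sampling formula satisfies: ∑_{c : c_l = x} G(c) = (n!·[(1−α)_{l−1}]^x/(x!·(l!)^x))·∑_{r=0}^{⌊n/l⌋−x} ((−1)^r·[(1−α)_{l−1}]^r/(r!·(l!)^r·(n−rl−lx)!))·∑_{k=r+x}^{r+x+n−rl−lx} V(n,k)·S(n−rl−lx, k−r−x; α), where the left sum ranges over all tuples (c_1,…,c_n) of nonnegative integers with ∑_{i=1}^{n} i·c_i = n and c_l = x. -/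
/-- Count vectors `(c_1,…,c_n)` with `∑ i·c_i = n`, encoded as `c : Fin n → ℕ`
where index `i` represents size `i+1`. -/
def countVectors (n : ℕ) : Finset (Fin n → ℕ) :=
  (Fintype.piFinset fun _ => Finset.range (n + 1)).filter
    (fun c => ∑ i, (i.1 + 1) * c i = n)

/-- The Gibbs sampling formula
`G(c) = n!·V(n,k)·∏_i [(1−α)_{i−1}]^{c_i}/((i!)^{c_i} c_i!)`, `k = ∑ c_i`. -/
noncomputable def gibbsSampling (α : ℝ) (V : ℕ → ℕ → ℝ) (n : ℕ) (c : Fin n → ℕ) : ℝ :=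
  (Nat.factorial n : ℝ) * V n (∑ i, c i) *
    ∏ i, (risingFac (1 - α) i.1) ^ (c i) /
      ((Nat.factorial (i.1 + 1) : ℝ) ^ (c i) * (Nat.factorial (c i) : ℝ))

/-!
Write `w_s = (1 - α)_{s-1} / s!` for the weight of a block of size `s` and
`W(c) = ∏ w_s ^ c_s / c_s!`, so that
`G(c) = n! V(n, ∑ c) W(c)`. Since `∑_r (-1)^r C(x+r, x) C(c_l, x+r) = [c_l = x]`, the law of `c_l`
is an alternating sum of the sums `∑_c W(c) C(c_l, j)`, and choosing `j` of the `c_l` blocks of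
size `l` turns such a sum into `w_l^j / j!` times the same kind of sum over count vectors of
`n - l j`. Grouping those by their number `k` of blocks produces `S(m, k; α)`: summing over
count vectors `c` of `m` with `k` blocks, both `k! ∑ W(c)` and `k! S(m, k; α) / m!` are the
coefficient of `t^m` in `(∑_s w_s t^s)^k`.
-/

open Finset Polynomial
open scoped Nat

/-- `countVectors n` is `partitionCounts n n` by definition. -/
def partitionCounts (N m : ℕ) : Finset (Fin N → ℕ) :=
  (Fintype.piFinset fun _ => range (m + 1)).filter fun c => ∑ i, (i.1 + 1) * c i = m

lemma mem_partitionCounts {N m : ℕ} {c : Fin N → ℕ} :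
    c ∈ partitionCounts N m ↔ ∑ i, (i.1 + 1) * c i = m := by
  refine ⟨fun h => (mem_filter.mp h).2, fun h => mem_filter.mpr ⟨?_, h⟩⟩
  refine Fintype.mem_piFinset.mpr fun i => mem_range.mpr (Nat.lt_succ_of_le ?_)
  calc c i ≤ (i.1 + 1) * c i := Nat.le_mul_of_pos_left _ i.1.succ_pos
    _ ≤ m := h ▸ single_le_sum (f := fun j : Fin N => (j.1 + 1) * c j) (by simp) (mem_univ i)

lemma sum_le_of_mem_partitionCounts {N m : ℕ} {c : Fin N → ℕ} (hc : c ∈ partitionCounts N m) :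
    ∑ i, c i ≤ m :=
  mem_partitionCounts.mp hc ▸ sum_le_sum fun i _ => Nat.le_mul_of_pos_left _ i.1.succ_pos

section WeightPolynomial

variable {R : Type*} [CommSemiring R] (w : ℕ → R)

noncomputable def weightPoly (N : ℕ) : R[X] := ∑ i ∈ range N, C (w i) * X ^ (i + 1)

lemma coeff_weightPoly_pow_eq_sum_compositions {N m : ℕ} (hm : m ≤ N) (k : ℕ) :
    (weightPoly w N ^ k).coeff m = ∑ f ∈ compositions m k, ∏ j, w (f j - 1) := by
  have hexpand : weightPoly w N ^ k = ∑ p ∈ Fintype.piFinset fun _ : Fin k => range N,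
      C (∏ j, w (p j)) * X ^ (∑ j, (p j + 1)) := by
    rw [weightPoly, ← Fin.prod_const, prod_univ_sum]
    simp only [prod_mul_distrib, map_prod, prod_pow_eq_pow_sum]
  rw [hexpand, finsetSum_coeff]
  simp only [coeff_C_mul_X_pow]
  rw [← sum_filter]
  refine sum_nbij' (fun p j => p j + 1) (fun f j => f j - 1) ?_ ?_ ?_ ?_ ?_
  · intro p hp
    rw [mem_filter, Fintype.mem_piFinset] at hp
    rw [compositions, mem_filter, Fintype.mem_piFinset]
    refine ⟨fun j => ?_, fun j => Nat.succ_pos _, hp.2.symm⟩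
    have := single_le_sum (f := fun j => p j + 1) (fun _ _ => Nat.zero_le _) (mem_univ j)
    simp only [mem_range]; omega
  · intro f hf
    rw [compositions, mem_filter, Fintype.mem_piFinset] at hf
    rw [mem_filter, Fintype.mem_piFinset]
    have hsum : ∑ j, (f j - 1 + 1) = m := by
      rw [← hf.2.2]; exact sum_congr rfl fun j _ => Nat.sub_add_cancel (hf.2.1 j)
    refine ⟨fun j => ?_, hsum.symm⟩
    have h1 := mem_range.mp (hf.1 j)
    have h2 := hf.2.1 j
    rw [mem_range]; omega
  · intro p _; simp
  · intro f hf
    rw [compositions, mem_filter] at hf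
    exact funext fun j => Nat.sub_add_cancel (hf.2.1 j)
  · intro p _; simp

lemma coeff_weightPoly_pow_eq_sum_partitionCounts (N m k : ℕ) :
    (weightPoly w N ^ k).coeff m = ∑ c ∈ (partitionCounts N m).filter (fun c => ∑ i, c i = k),
      (Nat.multinomial univ c : R) * ∏ i, w i.1 ^ c i := by
  have hexpand : weightPoly w N ^ k = ∑ c ∈ (univ : Finset (Fin N)).piAntidiag k,
      C ((Nat.multinomial univ c : R) * ∏ i, w i.1 ^ c i) * X ^ (∑ i, (i.1 + 1) * c i) := by
    rw [weightPoly, ← Fin.sum_univ_eq_sum_range (fun i => C (w i) * X ^ (i + 1)),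
      sum_pow_eq_sum_piAntidiag]
    refine sum_congr rfl fun c _ => ?_
    simp only [mul_pow, ← pow_mul, prod_mul_distrib, prod_pow_eq_pow_sum, map_mul, map_prod,
      map_pow, map_natCast, mul_assoc]
  rw [hexpand, finsetSum_coeff]
  simp only [coeff_C_mul_X_pow]
  rw [← sum_filter]
  refine sum_congr (ext fun c => ?_) fun _ _ => rfl
  simp [mem_piAntidiag, mem_partitionCounts, eq_comm, and_comm]

end WeightPolynomial

noncomputable def countWeight (w : ℕ → ℝ) {N : ℕ} (c : Fin N → ℕ) : ℝ :=
  ∏ i, w i.1 ^ c i / (c i)!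

lemma multinomial_mul_prod_pow_eq_factorial_mul_countWeight (w : ℕ → ℝ) {N : ℕ} (c : Fin N → ℕ) :
    (Nat.multinomial univ c : ℝ) * ∏ i, w i.1 ^ c i = (∑ i, c i)! * countWeight w c := by
  have hspec := congrArg (Nat.cast (R := ℝ)) (Nat.multinomial_spec univ c)
  push_cast at hspec
  rw [countWeight, prod_div_distrib, ← hspec]
  have : ∏ i, ((c i)! : ℝ) ≠ 0 := prod_ne_zero_iff.mpr fun i _ => by positivity
  field_simp

/-- `blockWeight α i` is the weight `(1 - α)_i / (i + 1)!` of a block of size `i + 1`. -/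
noncomputable def blockWeight (α : ℝ) (i : ℕ) : ℝ := risingFac (1 - α) i / (i + 1)!

lemma genStirling_eq_sum_countWeight (α : ℝ) {N m : ℕ} (hm : m ≤ N) (k : ℕ) :
    genStirling α m k = m ! * ∑ c ∈ (partitionCounts N m).filter (fun c => ∑ i, c i = k),
      countWeight (blockWeight α) c := by
  have hcomp : ∑ f ∈ compositions m k, ∏ j, risingFac (1 - α) (f j - 1) / (f j)! =
      ∑ f ∈ compositions m k, ∏ j, blockWeight α (f j - 1) := by
    refine sum_congr rfl fun f hf => prod_congr rfl fun j _ => ?_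
    rw [blockWeight, Nat.sub_add_cancel ((mem_filter.mp hf).2.1 j)]
  have hcount : ∑ c ∈ (partitionCounts N m).filter (fun c => ∑ i, c i = k),
      (Nat.multinomial univ c : ℝ) * ∏ i, blockWeight α i.1 ^ c i =
      k ! * ∑ c ∈ (partitionCounts N m).filter (fun c => ∑ i, c i = k),
        countWeight (blockWeight α) c := by
    rw [mul_sum]
    refine sum_congr rfl fun c hc => ?_
    rw [multinomial_mul_prod_pow_eq_factorial_mul_countWeight, (mem_filter.mp hc).2]
  rw [genStirling, hcomp, ← coeff_weightPoly_pow_eq_sum_compositions _ hm,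
    coeff_weightPoly_pow_eq_sum_partitionCounts, hcount]
  field_simp

lemma sum_mul_genStirling (α : ℝ) (u : ℕ → ℝ) {N M : ℕ} (hM : M ≤ N) (s : ℕ) :
    ∑ k ∈ Icc s (s + M), u k * genStirling α M (k - s) =
      M ! * ∑ c ∈ partitionCounts N M, u (∑ i, c i + s) * countWeight (blockWeight α) c := by
  have hfiber := sum_fiberwise_of_maps_to (s := partitionCounts N M) (t := range (M + 1))
    (g := fun c => ∑ i, c i) (f := fun c => u (∑ i, c i + s) * countWeight (blockWeight α) c)
    fun c hc => mem_range.mpr (Nat.lt_succ_of_le (sum_le_of_mem_partitionCounts hc))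
  rw [← hfiber, ← Ico_add_one_right_eq_Icc, sum_Ico_eq_sum_range, mul_sum,
    show s + M + 1 - s = M + 1 by omega]
  refine sum_congr rfl fun j _ => ?_
  rw [Nat.add_sub_cancel_left, genStirling_eq_sum_countWeight α hM, mul_sum, mul_sum, mul_sum]
  refine sum_congr rfl fun c hc => ?_
  rw [(mem_filter.mp hc).2, add_comm]
  ring

section Shift

variable {N : ℕ} (c : Fin N → ℕ) (i : Fin N) (j : ℕ)

lemma sum_mul_add_single (a : Fin N → ℕ) :
    ∑ k, a k * (c + Pi.single i j : Fin N → ℕ) k = ∑ k, a k * c k + a i * j := by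
  simp [mul_add, sum_add_distrib, Pi.single_apply]

lemma countWeight_add_single (w : ℕ → ℝ) :
    countWeight w (c + Pi.single i j) * (c i + j)! = countWeight w c * w i ^ j * (c i)! := by
  have hrest : ∏ k ∈ univ.erase i,
      w k.1 ^ (c + Pi.single i j : Fin N → ℕ) k / ((c + Pi.single i j : Fin N → ℕ) k)! =
      ∏ k ∈ univ.erase i, w k.1 ^ c k / (c k)! :=
    prod_congr rfl fun k hk => by simp [Pi.single_eq_of_ne (ne_of_mem_erase hk)]
  rw [countWeight, countWeight, ← mul_prod_erase univ _ (mem_univ i), hrest,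
    ← mul_prod_erase univ _ (mem_univ i)]
  simp only [Pi.add_apply, Pi.single_eq_same]
  field_simp
  ring

end Shift

lemma sum_partitionCounts_mul_choose (w u : ℕ → ℝ) {N m : ℕ} (i : Fin N) (j : ℕ)
    (hj : (i.1 + 1) * j ≤ m) :
    ∑ c ∈ partitionCounts N m, u (∑ k, c k) * countWeight w c * (c i).choose j =
      w i ^ j / j ! * ∑ c ∈ partitionCounts N (m - (i.1 + 1) * j),
        u (∑ k, c k + j) * countWeight w c := by
  rw [← sum_filter_of_ne (p := fun c => j ≤ c i) fun c _ h => by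
    by_contra hlt; exact h (by rw [Nat.choose_eq_zero_of_lt (not_le.mp hlt)]; simp), mul_sum]
  have hsingle_le : ∀ c : Fin N → ℕ, j ≤ c i → Pi.single i j ≤ c := fun c h k => by
    by_cases hk : k = i
    · subst hk; simpa using h
    · simp [Pi.single_eq_of_ne hk]
  refine sum_nbij' (fun c => c - Pi.single i j) (fun c => c + Pi.single i j) ?_ ?_ ?_ ?_ ?_
  · intro c hc
    obtain ⟨hc, hji⟩ := mem_filter.mp hc
    have hweight := sum_mul_add_single (c - Pi.single i j) i j (fun k => k.1 + 1)
    rw [tsub_add_cancel_of_le (hsingle_le c hji), mem_partitionCounts.mp hc] at hweight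
    exact mem_partitionCounts.mpr (by omega)
  · intro c hc
    refine mem_filter.mpr ⟨mem_partitionCounts.mpr ?_, by simp⟩
    rw [sum_mul_add_single, mem_partitionCounts.mp hc]
    omega
  · intro c hc
    exact tsub_add_cancel_of_le (hsingle_le c (mem_filter.mp hc).2)
  · intro c _
    exact add_tsub_cancel_right c _
  · intro c hc
    obtain ⟨c, rfl⟩ : ∃ c', c = c' + Pi.single i j :=
      ⟨c - Pi.single i j, (tsub_add_cancel_of_le (hsingle_le c (mem_filter.mp hc).2)).symm⟩
    have hchoose := Nat.add_choose_mul_factorial_mul_factorial (c i) j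
    have hweight := countWeight_add_single c i j w
    simp only [add_tsub_cancel_right, Pi.add_apply, Pi.single_eq_same, sum_add_distrib,
      sum_pi_single', mem_univ, if_true]
    rw [← hchoose] at hweight
    push_cast at hweight
    have hweight' : countWeight w (c + Pi.single i j) * ((c i + j).choose j * j !) =
        countWeight w c * w i ^ j :=
      mul_right_cancel₀ (show ((c i)! : ℝ) ≠ 0 by positivity) (by linear_combination hweight)
    field_simp
    linear_combination u (∑ x, c x + j) * hweight'

lemma sum_range_neg_one_pow_mul_choose_mul_choose {c x N : ℕ} (hc : c ≤ x + N) :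
    ∑ r ∈ range (N + 1), (-1 : ℤ) ^ r * ((x + r).choose x * c.choose (x + r)) =
      if c = x then 1 else 0 := by
  have hfactor : ∀ r, ((x + r).choose x * c.choose (x + r) : ℤ) = c.choose x * (c - x).choose r :=
    fun r => by
      rw [mul_comm]
      exact_mod_cast (Nat.choose_mul (Nat.le_add_right x r)).trans (by rw [Nat.add_sub_cancel_left])
  simp only [hfactor, mul_left_comm _ (c.choose x : ℤ), ← mul_sum]
  rcases lt_or_ge c x with hcx | hxc
  · simp [Nat.choose_eq_zero_of_lt hcx, hcx.ne]
  · have htrunc : ∑ r ∈ range (N + 1), (-1 : ℤ) ^ r * (c - x).choose r =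
        ∑ r ∈ range (c - x + 1), (-1 : ℤ) ^ r * (c - x).choose r :=
      (sum_subset (range_subset_range.mpr (by omega)) fun r hr hr' => by
        rw [Nat.choose_eq_zero_of_lt (by simp at hr'; omega)]; simp).symm
    rw [htrunc, Int.alternating_sum_range_choose]
    by_cases hcx : c = x
    · simp [hcx]
    · simp [hcx, show c - x ≠ 0 by omega]

lemma sum_filter_apply_eq_alternating (w u : ℕ → ℝ) {N m : ℕ} (i : Fin N) {x : ℕ}
    (hx : x ≤ m / (i.1 + 1)) :
    ∑ c ∈ (partitionCounts N m).filter (fun c => c i = x), u (∑ k, c k) * countWeight w c =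
      ∑ r ∈ range (m / (i.1 + 1) - x + 1), (-1) ^ r * w i ^ (x + r) / (x ! * r !) *
        ∑ c ∈ partitionCounts N (m - (i.1 + 1) * (x + r)),
          u (∑ k, c k + (x + r)) * countWeight w c := by
  have hle_div : ∀ a, a ≤ m / (i.1 + 1) ↔ (i.1 + 1) * a ≤ m := fun a => by
    rw [Nat.le_div_iff_mul_le (by omega), mul_comm]
  have hbound : ∀ c ∈ partitionCounts N m, c i ≤ x + (m / (i.1 + 1) - x) := fun c hc => by
    have := (hle_div (c i)).mpr <| mem_partitionCounts.mp hc ▸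
      single_le_sum (f := fun k : Fin N => (k.1 + 1) * c k) (by simp) (mem_univ i)
    omega
  calc _ = ∑ c ∈ partitionCounts N m, u (∑ k, c k) * countWeight w c *
        ∑ r ∈ range (m / (i.1 + 1) - x + 1),
          (-1) ^ r * ((x + r).choose x * (c i).choose (x + r) : ℝ) := by
        rw [sum_filter]
        refine sum_congr rfl fun c hc => ?_
        have := congrArg (Int.cast (R := ℝ))
          (sum_range_neg_one_pow_mul_choose_mul_choose (hbound c hc))
        push_cast at this
        rw [this]
        split_ifs <;> simp
    _ = ∑ r ∈ range (m / (i.1 + 1) - x + 1), (-1) ^ r * ((x + r).choose x : ℝ) *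
        ∑ c ∈ partitionCounts N m, u (∑ k, c k) * countWeight w c * (c i).choose (x + r) := by
        simp only [mul_sum]
        rw [sum_comm]
        exact sum_congr rfl fun r _ => sum_congr rfl fun c _ => by ring
    _ = _ := by
        refine sum_congr rfl fun r hr => ?_
        have hxr := (hle_div (x + r)).mp (by rw [mem_range] at hr; omega)
        rw [sum_partitionCounts_mul_choose w u i (x + r) hxr, ← mul_assoc]
        congr 1
        rw [Nat.cast_choose ℝ (Nat.le_add_right x r), Nat.add_sub_cancel_left]
        field_simp

lemma gibbsSampling_eq_mul_countWeight (α : ℝ) (V : ℕ → ℕ → ℝ) (n : ℕ) (c : Fin n → ℕ) :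
    gibbsSampling α V n c = n ! * (V n (∑ i, c i) * countWeight (blockWeight α) c) := by
  rw [gibbsSampling, countWeight, mul_assoc]
  congr 2
  refine prod_congr rfl fun i _ => ?_
  rw [blockWeight, div_pow, div_div]

/-- The law of the number of blocks of size `l` under the Gibbs sampling formula. -/
theorem gibbsSampling_law_of_size_l (α : ℝ) (V : ℕ → ℕ → ℝ)
    (n l x : ℕ) (hl : 1 ≤ l) (hln : l ≤ n) (hx : x ≤ n / l) :
    ∑ c ∈ (countVectors n).filter (fun c => c ⟨l - 1, by omega⟩ = x),
        gibbsSampling α V n c =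
      (Nat.factorial n : ℝ) * (risingFac (1 - α) (l - 1)) ^ x /
          ((Nat.factorial x : ℝ) * (Nat.factorial l : ℝ) ^ x) *
        ∑ r ∈ Finset.range (n / l - x + 1),
          (-1 : ℝ) ^ r * (risingFac (1 - α) (l - 1)) ^ r /
              ((Nat.factorial r : ℝ) * (Nat.factorial l : ℝ) ^ r *
                (Nat.factorial (n - r * l - l * x) : ℝ)) *
            ∑ k ∈ Finset.Icc (r + x) (r + x + (n - r * l - l * x)),
              V n k * genStirling α (n - r * l - l * x) (k - r - x) := by
  set i : Fin n := ⟨l - 1, by omega⟩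
  have hil : i.1 + 1 = l := Nat.sub_add_cancel hl
  have hw : blockWeight α i = risingFac (1 - α) (l - 1) / l ! := by rw [blockWeight, hil]
  calc _ = n ! * ∑ c ∈ (partitionCounts n n).filter (fun c => c i = x),
        V n (∑ k, c k) * countWeight (blockWeight α) c := by
        rw [mul_sum]
        exact sum_congr rfl fun c _ => gibbsSampling_eq_mul_countWeight α V n c
    _ = _ := by
        rw [sum_filter_apply_eq_alternating _ _ i (hil ▸ hx), hil, mul_sum, mul_sum]
        refine sum_congr rfl fun r _ => ?_
        have hM : n - l * (x + r) = n - r * l - l * x := by rw [mul_add, mul_comm l r]; omega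
        simp_rw [← hM, Nat.sub_sub _ r x]
        rw [sum_mul_genStirling α (V n) (Nat.sub_le _ _), hw, div_pow,
          add_comm r x]
        field_simp
        ring
end

section
/- Fix integers n, j, m ≥ 1 with j ≤ n, a composition (n_1,…,n_j) of n into j positive parts, a real α < 1, and real weights V(n,k) with V(n,j) ≠ 0. Fix k ∈ {1,…,m} and positive integers (s_1,…,s_k) with s = ∑_{i=1}^{k} s_i ≤ m. Then summing the full conditional distribution over all old-block allocations gives: ∑ q(m_1,…,m_j; s_1,…,s_k; k) = m!/(s_1!⋯s_k!·k!·(m−s)!)·(V(n+m,j+k)/V(n,j))·(n−jα)_{m−s}·∏_{i=1}^{k} (1−α)_{s_i−1}, where the sum ranges over all tuples (m_1,…,m_j) of nonnegative integers with ∑_{i=1}^{j} m_i = m − s. -/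
/-- The full conditional distribution weight
`q(m_1,…,m_j; s_1,…,s_k; k) = m!/(∏ s_i!·k!·∏ m_i!)·(V(n+m,j+k)/V(n,j))·
∏_i (n_i−α)_{m_i}·∏_i (1−α)_{s_i−1}`. -/
noncomputable def condFull (α : ℝ) (V : ℕ → ℕ → ℝ) (n j m : ℕ) (nv : Fin j → ℕ)
    (k : ℕ) (mv : Fin j → ℕ) (sv : Fin k → ℕ) : ℝ :=
  (Nat.factorial m : ℝ) /
      ((∏ i, (Nat.factorial (sv i) : ℝ)) * (Nat.factorial k : ℝ) *
        ∏ i, (Nat.factorial (mv i) : ℝ)) *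
    (V (n + m) (j + k) / V n j) *
    (∏ i, risingFac ((nv i : ℝ) - α) (mv i)) *
    ∏ i, risingFac (1 - α) (sv i - 1)

/-!
Since `(x)_M / M!` is the coefficient of `t^M` in `(1 - t)^{-x}`, rising factorials are of binomial
type: `(x + y)_M / M! = ∑_{a + b = M} (x)_a / a! · (y)_b / b!` (Chu–Vandermonde). Iterating over
the `j` old blocks, the sum of `∏_i (n_i - α)_{m_i} / m_i!` over all `(m_1,…,m_j)` with total `M`
is `(∑_i (n_i - α))_M / M! = (n - jα)_M / M!`; every other factor of `q` does not depend on the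
allocation.
-/

open Finset Polynomial

lemma mem_weakCompositions {M k : ℕ} {f : Fin k → ℕ} :
    f ∈ weakCompositions M k ↔ ∑ i, f i = M := by
  simp only [weakCompositions, mem_filter, Fintype.mem_piFinset, mem_range, Nat.lt_succ_iff,
    and_iff_right_iff_imp]
  rintro rfl i
  exact single_le_sum (fun _ _ => Nat.zero_le _) (mem_univ i)

lemma sum_weakCompositions_succ {β : Type*} [AddCommMonoid β] (M j : ℕ)
    (F : (Fin (j + 1) → ℕ) → β) :
    ∑ f ∈ weakCompositions M (j + 1), F f =
      ∑ p ∈ antidiagonal M, ∑ g ∈ weakCompositions p.2 j, F (Fin.cons p.1 g) := by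
  rw [sum_sigma']
  refine sum_nbij' (fun f => ⟨(f 0, M - f 0), Fin.tail f⟩) (fun q => Fin.cons q.1.1 q.2)
    ?_ ?_ ?_ ?_ ?_
  · intro f hf
    rw [mem_weakCompositions, Fin.sum_univ_succ] at hf
    simp only [mem_sigma, HasAntidiagonal.mem_antidiagonal, mem_weakCompositions, Fin.tail]
    omega
  · rintro ⟨⟨a, b⟩, g⟩ hq
    simp only [mem_sigma, HasAntidiagonal.mem_antidiagonal, mem_weakCompositions] at hq
    simp only [mem_weakCompositions, Fin.sum_univ_succ, Fin.cons_zero, Fin.cons_succ]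
    omega
  · intro f _
    exact Fin.cons_self_tail f
  · rintro ⟨⟨a, b⟩, g⟩ hq
    simp only [mem_sigma, HasAntidiagonal.mem_antidiagonal] at hq
    simp only [Fin.cons_zero, Fin.tail_cons]
    congr
    omega
  · intro f _
    rw [Fin.cons_self_tail]

lemma risingFac_eq_neg_one_pow_mul_descPochhammer (x : ℝ) (n : ℕ) :
    risingFac x n = (-1 : ℝ) ^ n * (descPochhammer ℤ n).smeval (-x) := by
  induction n with
  | zero => simp [risingFac]
  | succ n ih =>
    rw [risingFac, prod_range_succ, ← risingFac, ih, descPochhammer_succ_right,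
      smeval_mul, smeval_sub, smeval_X, smeval_natCast]
    ring

lemma risingFac_add_s9 (x y : ℝ) (M : ℕ) :
    risingFac (x + y) M =
      ∑ p ∈ antidiagonal M, (M.choose p.1 : ℝ) * (risingFac x p.1 * risingFac y p.2) := by
  rw [risingFac_eq_neg_one_pow_mul_descPochhammer, neg_add,
    Ring.descPochhammer_smeval_add M (Commute.all _ _), mul_sum]
  refine sum_congr rfl fun p hp => ?_
  rw [← HasAntidiagonal.mem_antidiagonal.mp hp, pow_add,
    risingFac_eq_neg_one_pow_mul_descPochhammer x, risingFac_eq_neg_one_pow_mul_descPochhammer y]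
  ring

lemma risingFac_add_div_factorial (x y : ℝ) (M : ℕ) :
    risingFac (x + y) M / M.factorial =
      ∑ p ∈ antidiagonal M,
        risingFac x p.1 / p.1.factorial * (risingFac y p.2 / p.2.factorial) := by
  rw [risingFac_add_s9, sum_div]
  refine sum_congr rfl fun p hp => ?_
  obtain rfl := HasAntidiagonal.mem_antidiagonal.mp hp
  rw [Nat.cast_add_choose]
  field_simp

lemma sum_weakCompositions_prod_risingFac_div_factorial (j M : ℕ) (x : Fin j → ℝ) :
    ∑ f ∈ weakCompositions M j, ∏ i, risingFac (x i) (f i) / (f i).factorial =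
      risingFac (∑ i, x i) M / M.factorial := by
  induction j generalizing M with
  | zero =>
    cases M with
    | zero =>
      have huniv : weakCompositions 0 0 = univ :=
        eq_univ_of_forall fun f => mem_weakCompositions.mpr (by simp)
      simp [huniv, risingFac]
    | succ M =>
      have hempty : weakCompositions (M + 1) 0 = ∅ :=
        eq_empty_of_forall_notMem fun f hf => by simp [mem_weakCompositions] at hf
      simp [hempty, risingFac, prod_range_succ']
  | succ j ih =>
    rw [sum_weakCompositions_succ, Fin.sum_univ_succ, risingFac_add_div_factorial]
    refine sum_congr rfl fun p _ => ?_
    simp only [Fin.prod_univ_succ, Fin.cons_zero, Fin.cons_succ, ← mul_sum]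
    rw [ih]

lemma condFull_eq_mul_prod_risingFac_div_factorial (α : ℝ) (V : ℕ → ℕ → ℝ) (n j m : ℕ)
    (nv : Fin j → ℕ) (k : ℕ) (mv : Fin j → ℕ) (sv : Fin k → ℕ) :
    condFull α V n j m nv k mv sv =
      (m.factorial : ℝ) / ((∏ i, ((sv i).factorial : ℝ)) * k.factorial) *
        (V (n + m) (j + k) / V n j) * (∏ i, risingFac (1 - α) (sv i - 1)) *
        ∏ i, risingFac ((nv i : ℝ) - α) (mv i) / (mv i).factorial := by
  rw [condFull, prod_div_distrib]
  ring

theorem condFull_sum_old_allocations_general (n j m : ℕ) (nv : Fin j → ℕ) (hsum : ∑ i, nv i = n)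
    (α : ℝ) (V : ℕ → ℕ → ℝ) (k : ℕ) (sv : Fin k → ℕ) :
    ∑ mv ∈ weakCompositions (m - ∑ i, sv i) j, condFull α V n j m nv k mv sv =
      (Nat.factorial m : ℝ) /
          ((∏ i, (Nat.factorial (sv i) : ℝ)) * (Nat.factorial k : ℝ) *
            (Nat.factorial (m - ∑ i, sv i) : ℝ)) *
        (V (n + m) (j + k) / V n j) * risingFac ((n : ℝ) - j * α) (m - ∑ i, sv i) *
        ∏ i, risingFac (1 - α) (sv i - 1) := by
  have hx : ∑ i, ((nv i : ℝ) - α) = n - j * α := by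
    simp [sum_sub_distrib, ← Nat.cast_sum, hsum]
  simp only [condFull_eq_mul_prod_risingFac_div_factorial, ← mul_sum,
    sum_weakCompositions_prod_risingFac_div_factorial, hx]
  ring

/-- Summing the full conditional distribution over old-block allocations. -/
theorem condFull_sum_old_allocations (n j m : ℕ) (hn : 1 ≤ n) (hj : 1 ≤ j) (hm : 1 ≤ m)
    (hjn : j ≤ n) (nv : Fin j → ℕ) (hnv : ∀ i, 0 < nv i) (hsum : ∑ i, nv i = n)
    (α : ℝ) (hα : α < 1) (V : ℕ → ℕ → ℝ) (hV : V n j ≠ 0)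
    (k : ℕ) (hk1 : 1 ≤ k) (hkm : k ≤ m)
    (sv : Fin k → ℕ) (hsv : ∀ i, 0 < sv i) (hs : ∑ i, sv i ≤ m) :
    ∑ mv ∈ weakCompositions (m - ∑ i, sv i) j, condFull α V n j m nv k mv sv =
      (Nat.factorial m : ℝ) /
          ((∏ i, (Nat.factorial (sv i) : ℝ)) * (Nat.factorial k : ℝ) *
            (Nat.factorial (m - ∑ i, sv i) : ℝ)) *
        (V (n + m) (j + k) / V n j) * risingFac ((n : ℝ) - j * α) (m - ∑ i, sv i) *
        ∏ i, risingFac (1 - α) (sv i - 1) :=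
  condFull_sum_old_allocations_general n j m nv hsum α V k sv
end
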